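/- Let α ∈ (0,2] and for integers k ≥ 1 write F_k(t) = F(-α/2, k-α/2; k+1; t) for t ∈ [0,1). Then F_k(t)/F_1(t) ≤ 1 for all k ≥ 1 and t ∈ [0,1). -/

import Mathlib

/-!
Put `a = α / 2` and write `F_x(t) = ∑ cₙ(x) tⁿ` with `cₙ(x) = (-a)ₙ (x - a)ₙ / ((x + 1)ₙ n!)`.
For `n ≥ 1` the factor `(-a)ₙ = -a (1 - a)ₙ₋₁` is `≤ 0`, while `(x - a)ₙ / (x + 1)ₙ` is increasing
in `x ≥ 1` (factor by factor, `(x - a + i) / (x + 1 + i)` increases in `x`). Hence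
`cₙ(k) ≤ cₙ(1)` for every `n`, so `F_k(t) ≤ F_1(t)` for `0 ≤ t < 1`. Finally `F_1(t) ≥ 3/4 > 0`,
because `|cₙ₊₁(1)| ≤ a (1 - a) / ((n + 1) (n + 2))` and these bounds sum to `a (1 - a) ≤ 1/4`.
-/

noncomputable def gaussHF (a b c x : ℝ) : ℝ :=
  ∑' n : ℕ, ((ascPochhammer ℝ n).eval a * (ascPochhammer ℝ n).eval b /
    ((ascPochhammer ℝ n).eval c * n.factorial)) * x ^ n

open Polynomial

theorem ascPochhammer_succ_eval_left {R : Type*} [CommSemiring R] (n : ℕ) (s : R) :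
    (ascPochhammer R (n + 1)).eval s = s * (ascPochhammer R n).eval (s + 1) := by
  simp [ascPochhammer_succ_left, eval_comp]

section OrderedSemiring

variable {R : Type*} [CommSemiring R] [PartialOrder R] [IsOrderedRing R]

theorem ascPochhammer_eval_nonneg {s : R} (hs : 0 ≤ s) (n : ℕ) :
    0 ≤ (ascPochhammer R n).eval s := by
  induction n with
  | zero => simp
  | succ n ih => rw [ascPochhammer_succ_eval]; positivity

theorem ascPochhammer_eval_le_eval {s t : R} (hs : 0 ≤ s) (hst : s ≤ t) (n : ℕ) :
    (ascPochhammer R n).eval s ≤ (ascPochhammer R n).eval t := by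
  induction n with
  | zero => simp
  | succ n ih =>
    simp only [ascPochhammer_succ_eval]
    exact mul_le_mul ih (by gcongr) (by positivity) (ascPochhammer_eval_nonneg (hs.trans hst) n)

end OrderedSemiring

theorem ascPochhammer_eval_mul_eval_add_le {R : Type*} [CommRing R] [LinearOrder R]
    [IsStrictOrderedRing R] {b c d : R} (hb : 0 ≤ b) (hbc : b ≤ c) (hd : 0 ≤ d) (n : ℕ) :
    (ascPochhammer R n).eval b * (ascPochhammer R n).eval (c + d) ≤
      (ascPochhammer R n).eval (b + d) * (ascPochhammer R n).eval c := by
  induction n with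
  | zero => simp
  | succ n ih =>
    simp only [ascPochhammer_succ_eval]
    have hfactor : (b + n) * (c + d + n) ≤ (b + d + n) * (c + n) := by nlinarith
    calc _ = (ascPochhammer R n).eval b * (ascPochhammer R n).eval (c + d) *
          ((b + n) * (c + d + n)) := by ring
      _ ≤ (ascPochhammer R n).eval (b + d) * (ascPochhammer R n).eval c *
          ((b + d + n) * (c + n)) := by
        have hc := hb.trans hbc
        have := ascPochhammer_eval_nonneg hc n
        have := ascPochhammer_eval_nonneg (add_nonneg hb hd) n
        exact mul_le_mul ih hfactor (by positivity) (by positivity)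
      _ = _ := by ring

theorem abs_ascPochhammer_eval_neg_le {a : ℝ} (ha0 : 0 ≤ a) (ha1 : a ≤ 1) (n : ℕ) :
    |(ascPochhammer ℝ n).eval (-a)| ≤ n.factorial := by
  cases n with
  | zero => simp
  | succ n =>
    rw [ascPochhammer_succ_eval_left, neg_add_eq_sub, abs_mul, abs_neg, abs_of_nonneg ha0,
      abs_of_nonneg (ascPochhammer_eval_nonneg (by linarith) n)]
    calc a * (ascPochhammer ℝ n).eval (1 - a) ≤ 1 * (ascPochhammer ℝ n).eval 1 :=
          mul_le_mul ha1 (ascPochhammer_eval_le_eval (by linarith) (by linarith) n)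
            (ascPochhammer_eval_nonneg (by linarith) n) zero_le_one
      _ ≤ (n + 1).factorial := by
        rw [one_mul, ascPochhammer_eval_one]
        exact_mod_cast Nat.factorial_le n.le_succ

theorem ascPochhammer_eval_two {S : Type*} [Semiring S] (n : ℕ) :
    (ascPochhammer S n).eval 2 = (n + 1).factorial := by
  simpa [one_add_one_eq_two, add_comm] using factorial_mul_ascPochhammer S 1 n

noncomputable def gaussCoeff (a b c : ℝ) (n : ℕ) : ℝ :=
  (ascPochhammer ℝ n).eval a * (ascPochhammer ℝ n).eval b /
    ((ascPochhammer ℝ n).eval c * n.factorial)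

theorem gaussHF_eq_tsum (a b c x : ℝ) : gaussHF a b c x = ∑' n, gaussCoeff a b c n * x ^ n := rfl

@[simp]
theorem gaussCoeff_zero (a b c : ℝ) : gaussCoeff a b c 0 = 1 := by simp [gaussCoeff]

section Comparison

variable {a x : ℝ}

theorem abs_gaussCoeff_le_one (ha0 : 0 ≤ a) (ha1 : a ≤ 1) (hax : a ≤ x) (n : ℕ) :
    |gaussCoeff (-a) (x - a) (x + 1) n| ≤ 1 := by
  have hnum : 0 ≤ (ascPochhammer ℝ n).eval (x - a) := ascPochhammer_eval_nonneg (by linarith) n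
  have hden : 0 < (ascPochhammer ℝ n).eval (x + 1) * n.factorial :=
    mul_pos (ascPochhammer_pos n _ (by linarith)) (by exact_mod_cast n.factorial_pos)
  rw [gaussCoeff, abs_div, abs_mul, abs_of_nonneg hnum, abs_of_pos hden, div_le_one hden, mul_comm]
  exact mul_le_mul (ascPochhammer_eval_le_eval (by linarith) (by linarith) n)
    (abs_ascPochhammer_eval_neg_le ha0 ha1 n) (abs_nonneg _)
    (ascPochhammer_eval_nonneg (by linarith) n)

theorem summable_gaussCoeff_mul_pow (ha0 : 0 ≤ a) (ha1 : a ≤ 1) (hax : a ≤ x) {t : ℝ}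
    (ht : |t| < 1) : Summable fun n ↦ gaussCoeff (-a) (x - a) (x + 1) n * t ^ n := by
  refine Summable.of_norm_bounded (summable_geometric_of_lt_one (abs_nonneg t) ht) fun n ↦ ?_
  rw [norm_mul, norm_pow, Real.norm_eq_abs, Real.norm_eq_abs]
  exact mul_le_of_le_one_left (by positivity) (abs_gaussCoeff_le_one ha0 ha1 hax n)

theorem gaussCoeff_le_gaussCoeff_one (ha0 : 0 ≤ a) (ha1 : a ≤ 1) (hx : 1 ≤ x) (n : ℕ) :
    gaussCoeff (-a) (x - a) (x + 1) n ≤ gaussCoeff (-a) (1 - a) 2 n := by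
  rcases n with _ | n
  · simp
  have hfirst : (ascPochhammer ℝ (n + 1)).eval (-a) ≤ 0 := by
    rw [ascPochhammer_succ_eval_left, neg_add_eq_sub, neg_mul]
    exact neg_nonpos.2 (mul_nonneg ha0 (ascPochhammer_eval_nonneg (by linarith) n))
  have hratio : (ascPochhammer ℝ (n + 1)).eval (1 - a) / (ascPochhammer ℝ (n + 1)).eval 2 ≤
      (ascPochhammer ℝ (n + 1)).eval (x - a) / (ascPochhammer ℝ (n + 1)).eval (x + 1) := by
    rw [div_le_div_iff₀ (ascPochhammer_pos _ _ two_pos) (ascPochhammer_pos _ _ (by linarith))]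
    have h := ascPochhammer_eval_mul_eval_add_le (b := 1 - a) (c := 2) (d := x - 1)
      (by linarith) (by linarith) (by linarith) (n + 1)
    rwa [show 2 + (x - 1) = x + 1 by ring, show 1 - a + (x - 1) = x - a by ring] at h
  calc gaussCoeff (-a) (x - a) (x + 1) (n + 1)
      = (ascPochhammer ℝ (n + 1)).eval (-a) * ((ascPochhammer ℝ (n + 1)).eval (x - a) /
          (ascPochhammer ℝ (n + 1)).eval (x + 1)) / (n + 1).factorial := by
        rw [gaussCoeff]; ring
    _ ≤ (ascPochhammer ℝ (n + 1)).eval (-a) * ((ascPochhammer ℝ (n + 1)).eval (1 - a) /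
          (ascPochhammer ℝ (n + 1)).eval 2) / (n + 1).factorial := by
        gcongr ?_ / _
        exact mul_le_mul_of_nonpos_left hratio hfirst
    _ = gaussCoeff (-a) (1 - a) 2 (n + 1) := by rw [gaussCoeff]; ring

theorem gaussHF_le_gaussHF_one (ha0 : 0 ≤ a) (ha1 : a ≤ 1) (hx : 1 ≤ x) {t : ℝ}
    (ht0 : 0 ≤ t) (ht1 : t < 1) :
    gaussHF (-a) (x - a) (x + 1) t ≤ gaussHF (-a) (1 - a) 2 t := by
  have ht : |t| < 1 := by rwa [abs_of_nonneg ht0]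
  have hsum₁ := summable_gaussCoeff_mul_pow ha0 ha1 ha1 ht
  rw [one_add_one_eq_two] at hsum₁
  exact Summable.tsum_le_tsum
    (fun n ↦ mul_le_mul_of_nonneg_right (gaussCoeff_le_gaussCoeff_one ha0 ha1 hx n) (by positivity))
    (summable_gaussCoeff_mul_pow ha0 ha1 (by linarith) ht) hsum₁

end Comparison

theorem sum_range_one_div_succ_mul_succ_add_one (N : ℕ) :
    ∑ n ∈ Finset.range N, (1 : ℝ) / ((n + 1) * (n + 2)) = 1 - 1 / (N + 1) := by
  induction N with
  | zero => simp
  | succ N ih =>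
    rw [Finset.sum_range_succ, ih]
    push_cast
    field_simp
    ring

section LowerBound

variable {a : ℝ}

theorem abs_gaussCoeff_one_succ_le (ha0 : 0 ≤ a) (ha1 : a ≤ 1) (n : ℕ) :
    |gaussCoeff (-a) (1 - a) 2 (n + 1)| ≤ a * (1 - a) / ((n + 1) * (n + 2)) := by
  have h1a : 0 ≤ 1 - a := by linarith
  have hP₁ := ascPochhammer_eval_nonneg h1a n
  have hP₂ := ascPochhammer_eval_nonneg (by linarith : 0 ≤ 2 - a) n
  have hcoeff : gaussCoeff (-a) (1 - a) 2 (n + 1) =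
      -(a * (1 - a) * ((ascPochhammer ℝ n).eval (1 - a) * (ascPochhammer ℝ n).eval (2 - a)) /
        ((n + 1) * (n + 2) * (n.factorial * (n + 1).factorial))) := by
    rw [gaussCoeff, ascPochhammer_succ_eval_left, ascPochhammer_succ_eval_left,
      ascPochhammer_eval_two, Nat.factorial_succ (n + 1), Nat.factorial_succ n, neg_add_eq_sub,
      show 1 - a + 1 = 2 - a by ring]
    push_cast
    ring
  have hprod : (ascPochhammer ℝ n).eval (1 - a) * (ascPochhammer ℝ n).eval (2 - a) ≤
      n.factorial * (n + 1).factorial := by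
    rw [← ascPochhammer_eval_one, ← ascPochhammer_eval_two]
    exact mul_le_mul (ascPochhammer_eval_le_eval h1a (by linarith) n)
      (ascPochhammer_eval_le_eval (by linarith) (by linarith) n) hP₂
      (ascPochhammer_eval_nonneg zero_le_one n)
  rw [hcoeff, abs_neg, abs_of_nonneg (by positivity)]
  calc _ ≤ a * (1 - a) * (n.factorial * (n + 1).factorial) /
        ((n + 1) * (n + 2) * (n.factorial * (n + 1).factorial)) := by gcongr
    _ = a * (1 - a) / ((n + 1) * (n + 2)) := by field_simp

/-- The tail of the series is at most `a (1 - a) ∑ 1 / ((n + 1) (n + 2)) = a (1 - a) ≤ 1 / 4`. -/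
theorem three_quarters_le_gaussHF_one (ha0 : 0 ≤ a) (ha1 : a ≤ 1) {t : ℝ} (ht : |t| < 1) :
    3 / 4 ≤ gaussHF (-a) (1 - a) 2 t := by
  have hsum := summable_gaussCoeff_mul_pow ha0 ha1 ha1 ht
  rw [one_add_one_eq_two] at hsum
  have htail : ∑' n, |gaussCoeff (-a) (1 - a) 2 (n + 1) * t ^ (n + 1)| ≤ 1 / 4 := by
    refine Real.tsum_le_of_sum_range_le (fun n ↦ abs_nonneg _) fun N ↦ ?_
    calc ∑ n ∈ Finset.range N, |gaussCoeff (-a) (1 - a) 2 (n + 1) * t ^ (n + 1)|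
        ≤ ∑ n ∈ Finset.range N, (1 : ℝ) / 4 * (1 / ((n + 1) * (n + 2))) := by
          refine Finset.sum_le_sum fun n _ ↦ ?_
          rw [abs_mul, abs_pow]
          calc _ ≤ |gaussCoeff (-a) (1 - a) 2 (n + 1)| :=
                mul_le_of_le_one_right (abs_nonneg _) (pow_le_one₀ (abs_nonneg t) ht.le)
            _ ≤ a * (1 - a) / ((n + 1) * (n + 2)) := abs_gaussCoeff_one_succ_le ha0 ha1 n
            _ ≤ 1 / 4 * (1 / ((n + 1) * (n + 2))) := by
                rw [div_eq_mul_one_div]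
                gcongr
                nlinarith [sq_nonneg (a - 1 / 2)]
      _ ≤ 1 / 4 := by
          rw [← Finset.mul_sum, sum_range_one_div_succ_mul_succ_add_one]
          have : 0 ≤ 1 / ((N : ℝ) + 1) := by positivity
          linarith
  have habs := (norm_tsum_le_tsum_norm ((summable_nat_add_iff 1).2 hsum).norm).trans htail
  rw [Real.norm_eq_abs, abs_le] at habs
  rw [gaussHF_eq_tsum, hsum.tsum_eq_zero_add, gaussCoeff_zero, pow_zero, mul_one]
  linarith [habs.1]

end LowerBound

theorem stmt_9 (α : ℝ) (hα : α ∈ Set.Ioc 0 2) (k : ℕ) (hk : 1 ≤ k)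
    (t : ℝ) (ht : t ∈ Set.Ico (0 : ℝ) 1) :
    gaussHF (-α / 2) ((k : ℝ) - α / 2) ((k : ℝ) + 1) t /
      gaussHF (-α / 2) (1 - α / 2) 2 t ≤ 1 := by
  obtain ⟨hα0, hα2⟩ := hα
  obtain ⟨ht0, ht1⟩ := ht
  have ha0 : 0 ≤ α / 2 := by positivity
  have ha1 : α / 2 ≤ 1 := by linarith
  have hF₁ := three_quarters_le_gaussHF_one ha0 ha1 (t := t) (by rwa [abs_of_nonneg ht0])
  rw [neg_div]
  exact div_le_one_of_le₀ (gaussHF_le_gaussHF_one ha0 ha1 (by exact_mod_cast hk) ht0 ht1)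
    (by linarith)
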